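/- Let F and G be nonzero orthogonal projections on a finite-dimensional complex Hilbert space. Then the trace distance between the normalized projectors satisfies ½‖G/rank(G) − F/rank(F)‖₁ ≤ (‖G − F‖₁ + |rank(G) − rank(F)|) / (2 max(rank(G), rank(F))). -/

import Mathlib

open scoped ComplexOrder

noncomputable section

/-- The trace norm of a complex square matrix: the sum of its singular values,
equal to the trace of `√(Xᴴ X)`. -/
def traceNorm {n : Type*} [Fintype n] [DecidableEq n] (X : Matrix n n ℂ) : ℝ :=
  (((Matrix.posSemidef_conjTranspose_mul_self X).1.eigenvectorUnitary : Matrix n n ℂ) *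
    Matrix.diagonal ((fun x : ℝ => (x : ℂ)) ∘ (fun x : ℝ => Real.sqrt x) ∘ (Matrix.posSemidef_conjTranspose_mul_self X).1.eigenvalues) *
    (star ((Matrix.posSemidef_conjTranspose_mul_self X).1.eigenvectorUnitary : Matrix n n ℂ))).trace.re

/-- The operator norm (largest singular value) of a complex square matrix. -/
def opNorm {n : Type*} [Fintype n] [DecidableEq n] (X : Matrix n n ℂ) : ℝ :=
  ‖Matrix.toEuclideanCLM (𝕜 := ℂ) X‖

/-!
With `m = max (rank G) (rank F)`, split
`G / rank G - F / rank F = (G - F) / m + (1 / rank G - 1 / m) • G - (1 / rank F - 1 / m) • F`.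
The trace norm of a projection is its rank, so the last two terms have trace norm at most
`(m - rank G) / m` and `(m - rank F) / m`, which add up to `|rank G - rank F| / m`; the triangle
inequality then gives the bound. The triangle inequality for Hermitian matrices comes from the
variational bound `re tr ((2P - 1) A) ≤ ‖A‖₁` for `0 ≤ P ≤ 1`, in which equality is attained
for `A + B` by the spectral projection of `A + B` onto its nonnegative part.
-/

open scoped MatrixOrder

namespace Matrix

variable {n : Type*} [Fintype n] [DecidableEq n]

theorem trace_eq_rank_of_isIdempotentElem {K : Type*} [Field K] {E : Matrix n n K}
    (hE : IsIdempotentElem E) : E.trace = E.rank := by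
  have h : IsIdempotentElem E.mulVecLin := by
    rw [IsIdempotentElem, Module.End.mul_eq_comp, ← mulVecLin_mul, hE.eq]
  rw [← trace_toLin'_eq, toLin'_apply', (LinearMap.IsIdempotentElem.isProj_range _ h).trace]
  rfl

theorem trace_mul_nonneg {P Q : Matrix n n ℂ} (hP : 0 ≤ P) (hQ : 0 ≤ Q) : 0 ≤ (P * Q).trace := by
  rw [← CFC.sqrt_mul_sqrt_self P, Matrix.mul_assoc, trace_mul_comm]
  exact LE.le.posSemidef ((CFC.sqrt_nonneg P).isSelfAdjoint.conjugate_nonneg hQ) |>.trace_nonneg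

theorem exists_abs_eq_two_smul_sub_one_mul {C : Matrix n n ℂ} (hC : C.IsHermitian) :
    ∃ P : Matrix n n ℂ, 0 ≤ P ∧ P ≤ 1 ∧ CFC.abs C = (2 • P - 1) * C := by
  have hcont (f : ℝ → ℝ) : ContinuousOn f (spectrum ℝ C) := C.finite_real_spectrum.continuousOn f
  let f : ℝ → ℝ := fun x => if 0 ≤ x then 1 else 0
  refine ⟨cfc f C, cfc_nonneg fun x _ => by positivity, cfc_le_one _ _ fun x _ => ?_, ?_⟩
  · unfold f; split_ifs <;> norm_num
  calc CFC.abs C = cfc (fun x => (2 • f x - 1) * x) C := by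
        rw [CFC.abs_eq_cfc_norm C hC.isSelfAdjoint]
        refine cfc_congr fun x _ => ?_
        unfold f
        split_ifs with hx
        · norm_num [abs_of_nonneg hx]
        · norm_num [abs_of_neg (not_le.mp hx)]
    _ = cfc (fun x => 2 • f x - 1) C * cfc id C := cfc_mul _ _ C (hcont _) (hcont _)
    _ = (2 • cfc f C - 1) * C := by
        rw [cfc_sub _ _ C (hcont _) (hcont _), cfc_smul 2 f C (hcont _), cfc_const_one ℝ C,
          cfc_id ℝ C]

end Matrix

section TraceNorm

open Matrix

variable {n : Type*} [Fintype n] [DecidableEq n]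

theorem traceNorm_eq_re_trace_abs (X : Matrix n n ℂ) : traceNorm X = (CFC.abs X).trace.re := by
  have hS := posSemidef_conjTranspose_mul_self X
  rw [CFC.abs, star_eq_conjTranspose, CFC.sqrt_eq_cfc, cfc_nnreal_eq_real _ _ hS.nonneg,
    hS.1.cfc_eq, IsHermitian.cfc, Unitary.conjStarAlgAut_apply]
  have hsqrt : (fun x : ℝ => ((NNReal.sqrt x.toNNReal : ℝ))) = Real.sqrt := by
    funext x; rw [Real.sqrt.eq_1]
  rw [hsqrt]
  rfl

theorem traceNorm_smul (c : ℂ) (X : Matrix n n ℂ) : traceNorm (c • X) = ‖c‖ * traceNorm X := by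
  simp [traceNorm_eq_re_trace_abs, CFC.abs_smul, trace_smul]

theorem traceNorm_neg (X : Matrix n n ℂ) : traceNorm (-X) = traceNorm X := by
  simp [traceNorm_eq_re_trace_abs]

theorem traceNorm_of_nonneg {X : Matrix n n ℂ} (hX : 0 ≤ X) : traceNorm X = X.trace.re := by
  rw [traceNorm_eq_re_trace_abs, CFC.abs_of_nonneg X]

theorem traceNorm_eq_rank {F : Matrix n n ℂ} (hF : F.IsHermitian) (hF2 : F * F = F) :
    traceNorm F = F.rank := by
  have hF0 : 0 ≤ F := by
    simpa [hF.isSelfAdjoint.star_eq, hF2] using star_mul_self_nonneg F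
  rw [traceNorm_of_nonneg hF0, trace_eq_rank_of_isIdempotentElem hF2, Complex.natCast_re]

theorem re_trace_two_smul_sub_one_mul_le_traceNorm {A P : Matrix n n ℂ} (hA : A.IsHermitian)
    (hP₀ : 0 ≤ P) (hP₁ : P ≤ 1) : ((2 • P - 1) * A).trace.re ≤ traceNorm A := by
  have hsub : 0 ≤ CFC.abs A - A := by
    rw [CFC.abs_sub_self A hA.isSelfAdjoint]; exact smul_nonneg zero_le_two (CFC.negPart_nonneg A)
  have hadd : 0 ≤ CFC.abs A + A := by
    rw [CFC.abs_add_self A hA.isSelfAdjoint]; exact smul_nonneg zero_le_two (CFC.posPart_nonneg A)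
  have hsplit : CFC.abs A - (2 • P - 1) * A = P * (CFC.abs A - A) + (1 - P) * (CFC.abs A + A) := by
    noncomm_ring
  have h := add_nonneg (trace_mul_nonneg hP₀ hsub) (trace_mul_nonneg (sub_nonneg.mpr hP₁) hadd)
  rw [← trace_add, ← hsplit, trace_sub, sub_nonneg] at h
  rw [traceNorm_eq_re_trace_abs]
  exact (Complex.le_def.mp h).1

theorem traceNorm_add_le {A B : Matrix n n ℂ} (hA : A.IsHermitian) (hB : B.IsHermitian) :
    traceNorm (A + B) ≤ traceNorm A + traceNorm B := by
  obtain ⟨P, hP₀, hP₁, hP⟩ := exists_abs_eq_two_smul_sub_one_mul (hA.add hB)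
  calc traceNorm (A + B) = ((2 • P - 1) * A).trace.re + ((2 • P - 1) * B).trace.re := by
        rw [traceNorm_eq_re_trace_abs, hP, Matrix.mul_add, trace_add, Complex.add_re]
    _ ≤ traceNorm A + traceNorm B :=
        add_le_add (re_trace_two_smul_sub_one_mul_le_traceNorm hA hP₀ hP₁)
          (re_trace_two_smul_sub_one_mul_le_traceNorm hB hP₀ hP₁)

theorem traceNorm_sub_le {A B : Matrix n n ℂ} (hA : A.IsHermitian) (hB : B.IsHermitian) :
    traceNorm (A - B) ≤ traceNorm A + traceNorm B := by
  simpa [sub_eq_add_neg, traceNorm_neg] using traceNorm_add_le hA hB.neg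

end TraceNorm

theorem abs_inv_sub_inv_mul_le {t m : ℝ} (ht : 0 ≤ t) (htm : t ≤ m) :
    |t⁻¹ - m⁻¹| * t ≤ (m - t) / m := by
  rcases ht.eq_or_lt with rfl | ht
  · simpa using div_nonneg htm htm
  · have hm : 0 < m := ht.trans_le htm
    rw [abs_of_nonneg (sub_nonneg.mpr (inv_anti₀ ht htm))]
    field_simp
    rfl

theorem traceNorm_normalized_proj_general {n : Type*} [Fintype n] [DecidableEq n]
    (F G : Matrix n n ℂ)
    (hF : F.IsHermitian) (hG : G.IsHermitian)
    (hF2 : F * F = F) (hG2 : G * G = G) :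
    (1 / 2) * traceNorm (((G.rank : ℂ))⁻¹ • G - ((F.rank : ℂ))⁻¹ • F) ≤
      (traceNorm (G - F) + |(G.rank : ℝ) - (F.rank : ℝ)|) /
        (2 * max G.rank F.rank) := by
  set t : ℝ := (G.rank : ℝ)
  set r : ℝ := (F.rank : ℝ)
  set m : ℝ := ((max G.rank F.rank : ℕ) : ℝ)
  have hm : m = max t r := Nat.cast_max _ _
  have hdecomp : (G.rank : ℂ)⁻¹ • G - (F.rank : ℂ)⁻¹ • F
      = ((m⁻¹ : ℝ) : ℂ) • (G - F) + ((t⁻¹ - m⁻¹ : ℝ) : ℂ) • G - ((r⁻¹ - m⁻¹ : ℝ) : ℂ) • F := by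
    push_cast
    module
  have hreal (x : ℝ) {A : Matrix n n ℂ} (hA : A.IsHermitian) : ((x : ℂ) • A).IsHermitian :=
    hA.smul (Complex.conj_ofReal x)
  have key : traceNorm ((G.rank : ℂ)⁻¹ • G - (F.rank : ℂ)⁻¹ • F)
      ≤ m⁻¹ * traceNorm (G - F) + |t⁻¹ - m⁻¹| * t + |r⁻¹ - m⁻¹| * r := by
    rw [hdecomp]
    refine (traceNorm_sub_le ((hreal _ (hG.sub hF)).add (hreal _ hG)) (hreal _ hF)).trans ?_
    grw [traceNorm_add_le (hreal _ (hG.sub hF)) (hreal _ hG)]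
    simp only [traceNorm_smul, Complex.norm_real, Real.norm_eq_abs, traceNorm_eq_rank hG hG2,
      traceNorm_eq_rank hF hF2, abs_inv, abs_of_nonneg (show 0 ≤ m by positivity)]
    exact le_rfl
  have habs : |t - r| = 2 * m - t - r := by
    rw [← max_sub_min_eq_abs', hm]
    linarith [min_add_max t r]
  calc 1 / 2 * traceNorm ((G.rank : ℂ)⁻¹ • G - (F.rank : ℂ)⁻¹ • F)
      ≤ 1 / 2 * (m⁻¹ * traceNorm (G - F) + (m - t) / m + (m - r) / m) := by
        grw [key, abs_inv_sub_inv_mul_le (by positivity) (hm ▸ le_max_left t r),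
          abs_inv_sub_inv_mul_le (by positivity) (hm ▸ le_max_right t r)]
    _ = (traceNorm (G - F) + |t - r|) / (2 * m) := by
        rw [habs]
        ring

/-- the trace distance between two normalized projectors. -/
theorem traceNorm_normalized_proj {n : Type*} [Fintype n] [DecidableEq n]
    (F G : Matrix n n ℂ)
    (hF : F.IsHermitian) (hG : G.IsHermitian)
    (hF2 : F * F = F) (hG2 : G * G = G)
    (hFne : F ≠ 0) (hGne : G ≠ 0) :
    (1 / 2) * traceNorm (((G.rank : ℂ))⁻¹ • G - ((F.rank : ℂ))⁻¹ • F) ≤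
      (traceNorm (G - F) + |(G.rank : ℝ) - (F.rank : ℝ)|) /
        (2 * max G.rank F.rank) :=
  traceNorm_normalized_proj_general F G hF hG hF2 hG2

end
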